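/- For x ∈ (ℤ/2ℤ)^n, let G_x be the real 2^n × 2^n matrix with rows and columns indexed by (ℤ/2ℤ)^n whose (y,t) entry equals (−1)^{f_O(y+t, y)} if y + t = x and 0 otherwise, where f_O is the octonion-type twisting function. Then for every x ∈ (ℤ/2ℤ)^n: G_x · G_x = (−1)^{f_O(x,x)} · Id, and the transpose of G_x equals (−1)^{f_O(x,x)} · G_x; in particular G_x is an orthogonal matrix with G_xᵀ = G_x⁻¹. -/
import Mathlib


open Matrix

/-- The real sign `(−1)^ε` of an element `ε ∈ ℤ/2ℤ`. -/
def sgn (ε : ZMod 2) : ℝ := if ε = 0 then 1 else -1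

/-- The octonion-type twisting function on `(ℤ/2ℤ)^n`. -/
def fO (n : ℕ) (x y : Fin n → ZMod 2) : ZMod 2 :=
  (∑ k : Fin n, ∑ j ∈ Finset.Iio k, ∑ i ∈ Finset.Iio j,
      (x i * x j * y k + x i * y j * x k + y i * x j * x k)) +
  ∑ j : Fin n, ∑ i ∈ Finset.Iic j, x i * y j

/-- The `2^n × 2^n` real matrix `G_x`, with rows and columns indexed by
`(ℤ/2ℤ)^n`, whose `(y,t)` entry is `(−1)^{f_O(y+t,y)}` if `y + t = x`
and `0` otherwise. -/
def GMat (n : ℕ) (x : Fin n → ZMod 2) :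
    Matrix (Fin n → ZMod 2) (Fin n → ZMod 2) ℝ :=
  fun y t => if y + t = x then sgn (fO n (y + t) y) else 0

lemma sgn_mul (a b : ZMod 2) : sgn a * sgn b = sgn (a + b) := by
  have h : ∀ c : ZMod 2, c = 0 ∨ c = 1 := by decide
  have h2 : (1 : ZMod 2) + 1 = 0 := by decide
  rcases h a with ha | ha <;> rcases h b with hb | hb <;>
    subst ha <;> subst hb <;> first | (rw [h2]; norm_num [sgn]) | norm_num [sgn]

lemma fO_add_right (n : ℕ) (x y z : Fin n → ZMod 2) :
    fO n x (y + z) = fO n x y + fO n x z := by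
  simp only [fO, Pi.add_apply, mul_add, add_mul, Finset.sum_add_distrib]
  ring

lemma zmod2_cancel : ∀ a b : ZMod 2, a + (a + b) = b := by decide

lemma key (n : ℕ) (x y : Fin n → ZMod 2) :
    fO n x y + fO n x (x + y) = fO n x x := by
  rw [fO_add_right]
  have h : ∀ a b : ZMod 2, a + (b + a) = b := by decide
  exact h _ _

lemma add_add_self (n : ℕ) (y t : Fin n → ZMod 2) : y + (y + t) = t := by
  funext i
  exact zmod2_cancel _ _

lemma pi_add_iff (n : ℕ) (x y t : Fin n → ZMod 2) : y + t = x ↔ t = x + y := by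
  have h1 : ∀ a b c : ZMod 2, a + b = c → b = c + a := by decide
  have h2 : ∀ a b c : ZMod 2, b = c + a → a + b = c := by decide
  constructor
  · intro h
    funext i
    exact h1 _ _ _ (congrFun h i)
  · intro h
    funext i
    exact h2 _ _ _ (congrFun h i)

lemma GMat_apply (n : ℕ) (x y t : Fin n → ZMod 2) :
    GMat n x y t = if t = x + y then sgn (fO n x y) else 0 := by
  unfold GMat
  by_cases h : t = x + y
  · have h' : y + t = x := (pi_add_iff n x y t).mpr h
    rw [if_pos h', if_pos h, h']
  · rw [if_neg (fun h' => h ((pi_add_iff n x y t).mp h')), if_neg h]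

/-- The matrices `G_x` satisfy `G_x² = (−1)^{f_O(x,x)}·Id` and
`G_xᵀ = (−1)^{f_O(x,x)}·G_x`; in particular each `G_x` is orthogonal with
`G_xᵀ = G_x⁻¹`. -/
theorem GMat_square_and_transpose (n : ℕ) (x : Fin n → ZMod 2) :
    GMat n x * GMat n x = sgn (fO n x x) • (1 : Matrix (Fin n → ZMod 2) (Fin n → ZMod 2) ℝ) ∧
    (GMat n x)ᵀ = sgn (fO n x x) • GMat n x ∧
    GMat n x * (GMat n x)ᵀ = 1 ∧
    (GMat n x)ᵀ = (GMat n x)⁻¹ := by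
  have h1 : GMat n x * GMat n x = sgn (fO n x x) • (1 : Matrix (Fin n → ZMod 2) (Fin n → ZMod 2) ℝ) := by
    ext y z
    rw [Matrix.mul_apply]
    simp only [GMat_apply, ite_mul, zero_mul, Finset.sum_ite_eq' Finset.univ,
      Finset.mem_univ, if_true]
    rw [add_add_self n x y]
    by_cases hz : z = y
    · subst hz
      rw [if_pos rfl, sgn_mul, key, Matrix.smul_apply, Matrix.one_apply_eq, smul_eq_mul, mul_one]
    · rw [if_neg hz, mul_zero, Matrix.smul_apply,
        Matrix.one_apply_ne (fun h => hz h.symm), smul_zero]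
  have h2 : (GMat n x)ᵀ = sgn (fO n x x) • GMat n x := by
    ext t y
    rw [Matrix.transpose_apply, Matrix.smul_apply, GMat_apply, GMat_apply, smul_eq_mul]
    by_cases h : t = x + y
    · subst h
      rw [if_pos rfl, if_pos (add_add_self n x y).symm, sgn_mul, fO_add_right,
        zmod2_cancel]
    · rw [if_neg h, if_neg, mul_zero]
      intro hy
      exact h (by rw [hy, add_add_self n x t])
  have hself : fO n x x + fO n x x = 0 := by
    have h : ∀ a : ZMod 2, a + a = 0 := by decide
    exact h _
  have h3 : GMat n x * (GMat n x)ᵀ = 1 := by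
    rw [h2, Matrix.mul_smul, h1, smul_smul, sgn_mul, hself]
    simp [sgn]
  exact ⟨h1, h2, h3, (Matrix.inv_eq_right_inv h3).symm⟩
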